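/- arXiv:2103.14240 — 9 statements merged into one kernel-verified Lean document; each statement's English description precedes it below -/
import Mathlib

section
/- Every S-Noetherian ring is S-coherent. -/
/-!
`S`-finiteness is stable under extensions: if `s₂` pushes the image of `M` into a finitely
generated `Q` and `s₁` pushes the kernel into a finitely generated `P`, then `s₁ s₂` pushes `M`
into `P` plus lifts of generators of `Q`. Splitting off one coordinate at a time, every
submodule of `Rⁿ` is therefore `S`-finite when every ideal is, and the kernel of a
presentation `Rⁿ ↠ I` of a finitely generated ideal is such a submodule.
-/

/-- A module `M` is `S`-finite if it has a finitely generated submodule `N`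
with `s • M ⊆ N` for some `s ∈ S`. -/
def IsSFinite (R : Type*) [CommRing R] (S : Submonoid R) (M : Type*) [AddCommGroup M]
    [Module R M] : Prop :=
  ∃ N : Submodule R M, N.FG ∧ ∃ s ∈ S, ∀ m : M, s • m ∈ N

/-- A module `M` is `S`-finitely presented if there is an exact sequence
`0 → K → F → M → 0` with `F` finitely generated free and `K` `S`-finite. -/
def IsSFinitelyPresented (R : Type*) [CommRing R] (S : Submonoid R) (M : Type*)
    [AddCommGroup M] [Module R M] : Prop :=
  ∃ (n : ℕ) (f : (Fin n → R) →ₗ[R] M), Function.Surjective f ∧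
    IsSFinite R S (LinearMap.ker f)

/-- `R` is `S`-Noetherian if every ideal is `S`-finite. -/
def IsSNoetherian (R : Type*) [CommRing R] (S : Submonoid R) : Prop :=
  ∀ I : Ideal R, IsSFinite R S I

/-- `R` is `S`-coherent if every finitely generated ideal is `S`-finitely presented. -/
def IsSCoherent (R : Type*) [CommRing R] (S : Submonoid R) : Prop :=
  ∀ I : Ideal R, I.FG → IsSFinitelyPresented R S I

theorem Submodule.FG.exists_fg_map_eq {R M M' : Type*} [Semiring R] [AddCommMonoid M]
    [Module R M] [AddCommMonoid M'] [Module R M'] {f : M →ₗ[R] M'} (hf : Function.Surjective f)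
    {Q : Submodule R M'} (hQ : Q.FG) : ∃ L : Submodule R M, L.FG ∧ L.map f = Q := by
  obtain ⟨t, rfl⟩ := hQ
  refine ⟨span R (Function.surjInv hf '' t), fg_span (t.finite_toSet.image _), ?_⟩
  rw [map_span, Set.image_image]
  simp only [Function.surjInv_eq, Set.image_id']

def IsSNoetherianModule (R : Type*) [CommRing R] (S : Submonoid R) (M : Type*)
    [AddCommGroup M] [Module R M] : Prop :=
  ∀ N : Submodule R M, IsSFinite R S N

section

variable {R : Type*} [CommRing R] {S : Submonoid R}
  {M M' : Type*} [AddCommGroup M] [Module R M] [AddCommGroup M'] [Module R M']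

namespace IsSFinite

theorem of_finite [Module.Finite R M] : IsSFinite R S M :=
  ⟨⊤, Module.Finite.fg_top, 1, S.one_mem, fun _ => Submodule.mem_top⟩

theorem of_linearEquiv (e : M ≃ₗ[R] M') (h : IsSFinite R S M') : IsSFinite R S M := by
  obtain ⟨N, hN, s, hs, hsN⟩ := h
  refine ⟨N.map e.symm.toLinearMap, hN.map _, s, hs, fun m => ⟨s • e m, hsN _, ?_⟩⟩
  simp

theorem of_injective (f : M →ₗ[R] M') (hf : Function.Injective f)
    (h : IsSFinite R S (LinearMap.range f)) : IsSFinite R S M :=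
  of_linearEquiv (LinearEquiv.ofInjective f hf) h

theorem of_ker_of_surjective (f : M →ₗ[R] M') (hf : Function.Surjective f)
    (hker : IsSFinite R S (LinearMap.ker f)) (hM' : IsSFinite R S M') : IsSFinite R S M := by
  obtain ⟨P, hP, s₁, hs₁, hs₁P⟩ := hker
  obtain ⟨Q, hQ, s₂, hs₂, hs₂Q⟩ := hM'
  obtain ⟨L, hL, rfl⟩ := hQ.exists_fg_map_eq hf
  refine ⟨P.map (LinearMap.ker f).subtype ⊔ L, (hP.map _).sup hL, s₁ * s₂, S.mul_mem hs₁ hs₂,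
    fun m => ?_⟩
  obtain ⟨l, hl, hlm⟩ := hs₂Q (f m)
  have hmem_ker : s₂ • m - l ∈ LinearMap.ker f := by simp [hlm]
  have hsplit : (s₁ * s₂) • m = s₁ • (s₂ • m - l) + s₁ • l := by
    rw [mul_smul, ← smul_add, sub_add_cancel]
  rw [hsplit]
  exact add_mem (Submodule.mem_sup_left ⟨_, hs₁P ⟨_, hmem_ker⟩, rfl⟩)
    (Submodule.mem_sup_right (L.smul_mem _ hl))

end IsSFinite

namespace IsSNoetherianModule

theorem of_injective (f : M →ₗ[R] M') (hf : Function.Injective f)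
    (h : IsSNoetherianModule R S M') : IsSNoetherianModule R S M :=
  fun N => IsSFinite.of_injective (f ∘ₗ N.subtype) (hf.comp N.injective_subtype) (h _)

theorem prod (hM : IsSNoetherianModule R S M) (hM' : IsSNoetherianModule R S M') :
    IsSNoetherianModule R S (M × M') := by
  intro N
  let p : N →ₗ[R] M := LinearMap.fst R M M' ∘ₗ N.subtype
  refine IsSFinite.of_ker_of_surjective p.rangeRestrict p.surjective_rangeRestrict ?_ (hM _)
  rw [LinearMap.ker_rangeRestrict]
  refine IsSFinite.of_injective (LinearMap.snd R M M' ∘ₗ N.subtype ∘ₗ (LinearMap.ker p).subtype)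
    ?_ (hM' _)
  rintro ⟨⟨x, hxN⟩, hx⟩ ⟨⟨y, hyN⟩, hy⟩ hxy
  have hx1 : x.1 = 0 := hx
  have hy1 : y.1 = 0 := hy
  simp_all [Prod.ext_iff]

theorem pi_fin (h : IsSNoetherianModule R S R) : ∀ n : ℕ, IsSNoetherianModule R S (Fin n → R)
  | 0 => fun _ => IsSFinite.of_finite
  | n + 1 => of_injective (Fin.consLinearEquiv R fun _ => R).symm.toLinearMap
      (LinearEquiv.injective _) (h.prod (pi_fin h n))

end IsSNoetherianModule

end

theorem s_noetherian_is_s_coherent {R : Type*} [CommRing R] (S : Submonoid R)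
    (h : IsSNoetherian R S) : IsSCoherent R S := by
  intro I hI
  have : Module.Finite R I := Module.Finite.iff_fg.mpr hI
  obtain ⟨n, f, hf⟩ := Module.Finite.exists_fin' R I
  exact ⟨n, f, hf, IsSNoetherianModule.pi_fin h n _⟩
end

section
/- If R is an S-coherent ring, then the localization R_S is a coherent ring. -/
open Submodule Pointwise

section

variable {R : Type*} [CommRing R] {S : Submonoid R}

theorem IsSFinite.fg_localized' {A M N : Type*} [CommRing A] [Algebra R A] [IsLocalization S A]
    [AddCommGroup M] [Module R M] [AddCommGroup N] [Module R N] [Module A N]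
    [IsScalarTower R A N] (f : M →ₗ[R] N) [IsLocalizedModule S f] {K : Submodule R M}
    (hK : IsSFinite R S K) : (K.localized' A S f).FG := by
  obtain ⟨_, ⟨T, rfl⟩, s, hs, hsK⟩ := hK
  set L := (span R (T : Set K)).map K.subtype
  have hLK : (1 : S) • L ≤ K := by
    rw [one_smul]
    exact map_subtype_le K _
  have hKL : (⟨s, hs⟩ : S) • K ≤ L := by
    rintro _ ⟨x, hx, rfl⟩
    exact ⟨_, hsK ⟨x, hx⟩, rfl⟩
  have hlocalized : K.localized' A S f = L.localized' A S f :=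
    le_antisymm (localized'_le_localized'_of_smul_le A S f _ hKL)
      (localized'_le_localized'_of_smul_le A S f _ hLK)
  rw [hlocalized, show L = span R (K.subtype '' T) from map_span _ _, localized'_span]
  exact fg_span ((T.finite_toSet.image _).image f)

theorem IsSFinitelyPresented.finitePresentation_of_isLocalizedModule {M M' : Type*}
    [AddCommGroup M] [Module R M] [AddCommGroup M'] [Module R M'] [Module (Localization S) M']
    [IsScalarTower R (Localization S) M'] (g : M →ₗ[R] M') [IsLocalizedModule S g]
    (hM : IsSFinitelyPresented R S M) : Module.FinitePresentation (Localization S) M' := by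
  obtain ⟨n, π, hπ, hker⟩ := hM
  let π' := (IsLocalizedModule.map S (LocalizedModule.mkLinearMap S (Fin n → R)) g π)
    |>.extendScalarsOfIsLocalization S (Localization S)
  refine Module.finitePresentation_of_surjective π'
    (IsLocalizedModule.map_surjective S _ _ π hπ) ?_
  rw [← LinearMap.localized'_ker_eq_ker_localizedMap]
  exact hker.fg_localized' _

theorem IsLocalization.exists_fg_map_eq_of_fg {A : Type*} [CommRing A] [Algebra R A]
    [IsLocalization S A] {J : Ideal A} (hJ : J.FG) :
    ∃ I : Ideal R, I.FG ∧ I.map (algebraMap R A) = J := by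
  classical
  obtain ⟨T, rfl⟩ := hJ
  refine ⟨Ideal.span (finsetIntegerMultiple S T), fg_span (Finset.finite_toSet _), ?_⟩
  set c := commonDenomOfFinset S T
  have hc : (c : R) • (T : Set A) = algebraMap R A c • (T : Set A) := by
    ext; simp [Set.mem_smul_set, Algebra.smul_def]
  rw [Ideal.map_span, finsetIntegerMultiple_image, Submonoid.smul_def, hc, Ideal.span,
    span_smul_eq_of_isUnit _ _ (map_units A c)]

end

theorem s_coherent_localization_coherent {R : Type*} [CommRing R] (S : Submonoid R)
    (h : IsSCoherent R S) :
    ∀ J : Ideal (Localization S), J.FG → Module.FinitePresentation (Localization S) J := by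
  intro J hJ
  obtain ⟨I, hI, rfl⟩ := IsLocalization.exists_fg_map_eq_of_fg (S := S) hJ
  exact (h I hI).finitePresentation_of_isLocalizedModule (Algebra.idealMap _ I)
end

section
/- If R is an integral domain which is not a field and S = R \ {0}, then every R-module is S-flat, and hence there exists an S-flat R-module which is not flat. -/
/-- A module `M` is `S`-flat if for every finitely generated ideal `I`,
the kernel of `I ⊗[R] M → R ⊗[R] M` is `S`-torsion. -/
def IsSFlat (R : Type*) [CommRing R] (S : Submonoid R) (M : Type*) [AddCommGroup M]
    [Module R M] : Prop :=
  ∀ I : Ideal R, I.FG →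
    ∀ x ∈ LinearMap.ker (LinearMap.rTensor M (I.subtype)), ∃ s ∈ S, s • x = 0

open scoped nonZeroDivisors TensorProduct

/-- Multiplication by `a ∈ I` on `I ⊗ M` factors as `I ⊗ M → R ⊗ M → I ⊗ M`, the second map being
`r ↦ r a` tensored with `M`. -/
lemma Ideal.smul_eq_zero_of_mem_ker_rTensor_subtype {R M : Type*} [CommRing R] [AddCommGroup M]
    [Module R M] {I : Ideal R} {a : R} (ha : a ∈ I) {x : I ⊗[R] M}
    (hx : x ∈ LinearMap.ker (LinearMap.rTensor M I.subtype)) : a • x = 0 := by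
  have hfactor : (LinearMap.toSpanSingleton R I ⟨a, ha⟩) ∘ₗ I.subtype = a • LinearMap.id := by
    ext y
    exact mul_comm (y : R) a
  calc a • x = LinearMap.rTensor M ((LinearMap.toSpanSingleton R I ⟨a, ha⟩) ∘ₗ I.subtype) x := by
        rw [hfactor, LinearMap.rTensor_smul, LinearMap.rTensor_id]
        rfl
    _ = 0 := by
        rw [LinearMap.rTensor_comp, LinearMap.comp_apply, LinearMap.mem_ker.mp hx, map_zero]

lemma isSFlat_of_forall_ne_zero_mem {R : Type*} [CommRing R] {S : Submonoid R}
    (hS : ∀ x : R, x ≠ 0 → x ∈ S) (M : Type*) [AddCommGroup M] [Module R M] :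
    IsSFlat R S M := by
  intro I _ x hx
  by_cases hI : I = ⊥
  · subst hI
    exact ⟨1, S.one_mem, by rw [Subsingleton.elim x 0, smul_zero]⟩
  · obtain ⟨a, haI, ha0⟩ := Submodule.exists_mem_ne_zero_of_ne_bot hI
    exact ⟨a, hS a ha0, Ideal.smul_eq_zero_of_mem_ker_rTensor_subtype haI hx⟩

/-- The class of `1` is killed by `a`, whereas a flat module has no `a`-torsion. -/
lemma Ideal.not_flat_quotient_span_singleton {R : Type*} [CommRing R] {a : R} (ha : a ∈ R⁰)
    (hau : ¬IsUnit a) : ¬Module.Flat R (R ⧸ Ideal.span {a}) := by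
  intro _
  have hkill : a • Ideal.Quotient.mk (Ideal.span {a}) 1 = a • 0 := by
    rw [smul_zero, Algebra.smul_def, Ideal.Quotient.algebraMap_eq, ← map_mul, mul_one,
      Ideal.Quotient.eq_zero_iff_mem]
    exact Ideal.mem_span_singleton_self a
  have hone : Ideal.Quotient.mk (Ideal.span {a}) 1 = 0 :=
    Module.Flat.isSMulRegular_of_nonZeroDivisors ha hkill
  rw [Ideal.Quotient.eq_zero_iff_mem, Ideal.mem_span_singleton] at hone
  exact hau (isUnit_of_dvd_one hone)

theorem domain_all_modules_s_flat {R : Type} [CommRing R] [IsDomain R]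
    (hnf : ¬IsField R) (S : Submonoid R) (hS : ∀ x : R, x ∈ S ↔ x ≠ 0) :
    (∀ (M : Type) [AddCommGroup M] [Module R M], IsSFlat R S M) ∧
    ∃ M : ModuleCat R, IsSFlat R S M ∧ ¬Module.Flat R M := by
  have hS' : ∀ x : R, x ≠ 0 → x ∈ S := fun x => (hS x).mpr
  obtain ⟨a, ha0, hau⟩ := Ring.exists_not_isUnit_of_not_isField hnf
  exact ⟨fun M _ _ => isSFlat_of_forall_ne_zero_mem hS' M,
    ModuleCat.of R (ULift (R ⧸ Ideal.span {a})), isSFlat_of_forall_ne_zero_mem hS' _,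
    fun _ => Ideal.not_flat_quotient_span_singleton (mem_nonZeroDivisors_of_ne_zero ha0) hau
      Module.Flat.of_ulift⟩
end

section
/- An R-module M is S-flat if and only if the localization M_S is a flat R_S-module. -/
open LinearMap

namespace IsLocalizedModule

variable {R : Type*} [CommSemiring R] (S : Submonoid R)

theorem map_injective_iff {M M' N N' : Type*} [AddCommMonoid M] [Module R M]
    [AddCommGroup M'] [Module R M'] [AddCommMonoid N] [Module R N] [AddCommMonoid N'] [Module R N']
    (gM : M →ₗ[R] M') (gN : N →ₗ[R] N') [IsLocalizedModule S gM] [IsLocalizedModule S gN]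
    (f : M →ₗ[R] N) :
    Function.Injective (map S gM gN f) ↔ ∀ x ∈ ker f, ∃ s ∈ S, s • x = 0 := by
  rw [injective_iff_map_eq_zero, ← ker_eq_bot', ker_localizedMap_eq_localized₀_ker, eq_bot_iff]
  constructor
  · intro h x hx
    have hx₀ : mk' gM x (1 : S) = 0 := h ⟨x, hx, 1, rfl⟩
    obtain ⟨s, hs⟩ := (mk'_eq_zero' gM (1 : S)).mp hx₀
    exact ⟨s, s.2, hs⟩
  · rintro h _ ⟨x, hx, s, rfl⟩
    obtain ⟨t, ht, htx⟩ := h x hx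
    exact (mk'_eq_zero' gM s).mpr ⟨⟨t, ht⟩, htx⟩

variable {M M' : Type*} [AddCommMonoid M] [Module R M] [AddCommMonoid M'] [Module R M']

instance lTensor (g : M →ₗ[R] M') [IsLocalizedModule S g] (N : Type*) [AddCommMonoid N]
    [Module R N] :
    IsLocalizedModule S (g.lTensor N) := by
  have hcomm : g.lTensor N = (TensorProduct.comm R M' N).toLinearMap ∘ₗ g.rTensor N ∘ₗ
      (TensorProduct.comm R N M).toLinearMap := by
    ext; simp
  rw [hcomm]
  -- the library instance is stated for `AlgebraTensorModule.rTensor`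
  have : IsLocalizedModule S (g.rTensor N) := rTensor (R := R) (A := R) (N := N) S g
  have : IsLocalizedModule S (g.rTensor N ∘ₗ (TensorProduct.comm R N M).toLinearMap) :=
    .of_linearEquiv_right S _ _
  exact .of_linearEquiv S _ _

theorem map_rTensor (g : M →ₗ[R] M') [IsLocalizedModule S g] {N P : Type*} [AddCommMonoid N]
    [Module R N] [AddCommMonoid P] [Module R P] (f : N →ₗ[R] P) :
    map S (g.lTensor N) (g.lTensor P) (f.rTensor M) = f.rTensor M' := by
  apply linearMap_ext S (g.lTensor N) (g.lTensor P)
  rw [map_comp]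
  ext
  simp

theorem rTensor_injective_iff (g : M →ₗ[R] M') [IsLocalizedModule S g] {N P : Type*}
    [AddCommGroup N] [Module R N] [AddCommMonoid P] [Module R P] (f : N →ₗ[R] P) :
    Function.Injective (f.rTensor M') ↔ ∀ x ∈ ker (f.rTensor M), ∃ s ∈ S, s • x = 0 := by
  rw [← map_rTensor S g f, map_injective_iff]

end IsLocalizedModule

theorem s_flat_iff_localization_flat {R : Type*} [CommRing R] (S : Submonoid R)
    {M : Type*} [AddCommGroup M] [Module R M] :
    IsSFlat R S M ↔ Module.Flat (Localization S) (LocalizedModule S M) := by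
  rw [Module.flat_iff_of_isLocalization (Localization S) S, Module.Flat.iff_rTensor_injective]
  exact forall_congr' fun I => imp_congr_right fun _ =>
    (IsLocalizedModule.rTensor_injective_iff S (LocalizedModule.mkLinearMap S M) I.subtype).symm
end

section
/- A direct sum ⊕_{j∈J} M_j of R-modules is S-Mittag-Leffler with respect to a class Q if and only if each summand M_j is S-Mittag-Leffler with respect to Q. -/
/-- The canonical map `M ⊗[R] (∀ i, N i) →ₗ[R] ∀ i, M ⊗[R] N i`. -/
noncomputable def tensorPiMap (R : Type*) [CommRing R] (M : Type*) [AddCommGroup M]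
    [Module R M] {ι : Type*} (N : ι → Type*) [∀ i, AddCommGroup (N i)]
    [∀ i, Module R (N i)] :
    (TensorProduct R M (∀ i, N i)) →ₗ[R] (∀ i, TensorProduct R M (N i)) :=
  LinearMap.pi fun i => LinearMap.lTensor M (LinearMap.proj i)

/-- `M` is `S`-Mittag-Leffler with respect to a class `Q` of `R`-modules if for every
family of modules in `Q`, the canonical map `M ⊗ ∏ Qᵢ → ∏ (M ⊗ Qᵢ)` has `S`-torsion kernel. -/
def IsSMittagLeffler (R : Type) [CommRing R] (S : Submonoid R) (M : Type) [AddCommGroup M]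
    [Module R M] (Q : ModuleCat R → Prop) : Prop :=
  ∀ (ι : Type) (N : ι → ModuleCat R), (∀ i, Q (N i)) →
    ∀ x ∈ LinearMap.ker (tensorPiMap R M fun i => (N i : Type)), ∃ s ∈ S, s • x = 0

open LinearMap TensorProduct

/-- Naturality of `tensorPiMap` in the first variable. -/
lemma tensorPiMap_naturality {R : Type} [CommRing R] {M M' : Type} [AddCommGroup M]
    [Module R M] [AddCommGroup M'] [Module R M'] (f : M →ₗ[R] M') {ι : Type}
    (N : ι → Type) [∀ i, AddCommGroup (N i)] [∀ i, Module R (N i)]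
    (x : TensorProduct R M (∀ i, N i)) (i : ι) :
    tensorPiMap R M' N (f.rTensor _ x) i = f.rTensor (N i) (tensorPiMap R M N x i) := by
  simp only [tensorPiMap, LinearMap.pi_apply]
  rw [← LinearMap.comp_apply, ← LinearMap.comp_apply,
    LinearMap.lTensor_comp_rTensor, LinearMap.rTensor_comp_lTensor]

lemma directsum_aux {R : Type} [CommRing R] {J : Type} [DecidableEq J] (M : J → Type)
    [∀ j, AddCommGroup (M j)] [∀ j, Module R (M j)] (m : DirectSum J M) :
    ∃ F : Finset J, ∀ F' : Finset J, F ⊆ F' →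
      (∑ j ∈ F', DirectSum.lof R J M j (DirectSum.component R J M j m)) = m := by
  induction m using DirectSum.induction_on with
  | zero => exact ⟨∅, fun F' _ => by simp⟩
  | of j b =>
      refine ⟨{j}, fun F' hF' => ?_⟩
      rw [Finset.sum_eq_single j
        (fun k _ hk => by
          rw [show DirectSum.of M j b = DirectSum.lof R J M j b from rfl,
            DirectSum.component.of]
          simp [Ne.symm hk])
        (fun hj => absurd (hF' (Finset.mem_singleton_self j)) hj)]
      rw [show DirectSum.of M j b = DirectSum.lof R J M j b from rfl,
        DirectSum.component.lof_self]
  | add a b ha hb =>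
      obtain ⟨F, hF⟩ := ha
      obtain ⟨G, hG⟩ := hb
      refine ⟨F ∪ G, fun F' hF' => ?_⟩
      simp only [map_add, Finset.sum_add_distrib]
      rw [hF F' (Finset.union_subset_left hF'),
        hG F' (Finset.union_subset_right hF')]

lemma directsum_tensor_aux {R : Type} [CommRing R] {J : Type} [DecidableEq J] (M : J → Type)
    [∀ j, AddCommGroup (M j)] [∀ j, Module R (M j)] (P : Type) [AddCommGroup P] [Module R P]
    (x : TensorProduct R (DirectSum J M) P) :
    ∃ F : Finset J, ∀ F' : Finset J, F ⊆ F' → (∑ j ∈ F',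
      ((DirectSum.lof R J M j ∘ₗ DirectSum.component R J M j)).rTensor P) x = x := by
  induction x using TensorProduct.induction_on with
  | zero =>
      refine ⟨∅, fun F' _ => ?_⟩
      exact map_zero _
  | tmul m n =>
      obtain ⟨F, hF⟩ := directsum_aux (R := R) M m
      refine ⟨F, fun F' hF' => ?_⟩
      rw [LinearMap.sum_apply]
      simp only [LinearMap.rTensor_tmul, LinearMap.comp_apply]
      rw [← TensorProduct.sum_tmul, hF F' hF']
  | add a b ha hb =>
      obtain ⟨F, hF⟩ := ha
      obtain ⟨G, hG⟩ := hb
      refine ⟨F ∪ G, fun F' hF' => ?_⟩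
      rw [map_add, hF F' (Finset.union_subset_left hF'),
        hG F' (Finset.union_subset_right hF')]

theorem directSum_s_mittagLeffler_iff {R : Type} [CommRing R] (S : Submonoid R)
    {J : Type} (M : J → Type) [∀ j, AddCommGroup (M j)] [∀ j, Module R (M j)]
    (Q : ModuleCat R → Prop) :
    IsSMittagLeffler R S (DirectSum J M) Q ↔ ∀ j, IsSMittagLeffler R S (M j) Q := by
  classical
  constructor
  · intro h j ι N hN x hx
    rw [LinearMap.mem_ker] at hx
    set y := (DirectSum.lof R J M j).rTensor _ x with hy
    have hyk : y ∈ LinearMap.ker (tensorPiMap R (DirectSum J M) fun i => (N i : Type)) := by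
      rw [LinearMap.mem_ker]
      funext i
      rw [hy, tensorPiMap_naturality, hx]
      simp
    obtain ⟨s, hs, h0⟩ := h ι N hN y hyk
    refine ⟨s, hs, ?_⟩
    have hcl : (DirectSum.component R J M j) ∘ₗ (DirectSum.lof R J M j) = LinearMap.id := by
      ext m
      simp
    have := congrArg ((DirectSum.component R J M j).rTensor (∀ i, (N i : Type))) h0
    rw [map_smul, map_zero, hy, ← LinearMap.comp_apply, ← LinearMap.rTensor_comp,
      hcl, LinearMap.rTensor_id, LinearMap.id_apply] at this
    exact this
  · intro h ι N hN x hx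
    rw [LinearMap.mem_ker] at hx
    obtain ⟨F, hF⟩ := directsum_tensor_aux M (∀ i, (N i : Type)) x
    have hker : ∀ j, (DirectSum.component R J M j).rTensor _ x ∈
        LinearMap.ker (tensorPiMap R (M j) fun i => (N i : Type)) := by
      intro j
      rw [LinearMap.mem_ker]
      funext i
      rw [tensorPiMap_naturality, hx]
      simp
    choose s hsS hs using fun j => h j ι N hN _ (hker j)
    refine ⟨∏ j ∈ F, s j, Submonoid.prod_mem S (fun j _ => hsS j), ?_⟩
    rw [← hF F (le_refl F), LinearMap.sum_apply, Finset.smul_sum]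
    refine Finset.sum_eq_zero fun j hj => ?_
    rw [LinearMap.rTensor_comp, LinearMap.comp_apply,
      Finset.prod_eq_mul_prod_sdiff_singleton_of_mem hj, mul_comm, mul_smul,
      ← map_smul, hs j, map_zero, smul_zero]
end

section
/- If M is S-Mittag-Leffler with respect to a class Q of R-modules, then M is S-Mittag-Leffler with respect to the class of all pure submodules of modules in Q. -/
/-- `P` is (isomorphic to) a pure submodule of some module in `Q`: there is a monomorphism
`P → Q₀` with `Q₀ ∈ Q` which stays injective after tensoring with any module `N`. -/
def IsPureSubmoduleOf {R : Type} [CommRing R] (Q : ModuleCat R → Prop)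
    (P : ModuleCat R) : Prop :=
  ∃ Q₀ : ModuleCat R, Q Q₀ ∧ ∃ f : P →ₗ[R] Q₀, Function.Injective f ∧
    ∀ N : ModuleCat R, Function.Injective (LinearMap.lTensor (N : Type) f)

/-!
A linear map `f : P → Q` stays injective after tensoring with every module iff it reflects
solvability of finite linear systems: if `f (pᵢ) = ∑ⱼ aᵢⱼ qⱼ` is solvable in `Q`, then
`pᵢ = ∑ⱼ aᵢⱼ p'ⱼ` is solvable in `P`. Both directions are the equational criterion for the
vanishing of `∑ mᵢ ⊗ nᵢ` when the `mᵢ` generate: one tests `f` against `Rᵐ` modulo the columns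
of `a`, the other reduces to finitely generated modules, where tensors can be written on a fixed
generating family. The second property is checked coordinatewise, so a product of pure
embeddings `Nᵢ → Qᵢ` is again pure. By naturality of `M ⊗ ∏ → ∏ (M ⊗ ·)`, an element `x` of the
kernel for the `Nᵢ` maps into the kernel for the `Qᵢ`; some `s ∈ S` kills the image, and purity
lets `s • x = 0` be read off from that.
-/

open TensorProduct LinearMap Function Submodule

namespace TensorProduct

variable {R M N : Type*} [CommRing R] [AddCommGroup M] [Module R M] [AddCommGroup N] [Module R N]

theorem exists_sum_tmul_eq_of_span_eq_top {ι : Type*} [Fintype ι] {m : ι → M}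
    (hm : span R (Set.range m) = ⊤) (x : M ⊗[R] N) : ∃ n : ι → N, x = ∑ i, m i ⊗ₜ n i := by
  induction x using TensorProduct.induction_on with
  | zero => exact ⟨0, by simp⟩
  | tmul y z =>
    obtain ⟨c, rfl⟩ := (mem_span_range_iff_exists_fun R).mp (hm ▸ mem_top : y ∈ span R _)
    exact ⟨fun i => c i • z, by simp only [sum_tmul, smul_tmul]⟩
  | add x y hx hy =>
    obtain ⟨nx, rfl⟩ := hx
    obtain ⟨ny, rfl⟩ := hy
    exact ⟨nx + ny, by simp only [Pi.add_apply, tmul_add, Finset.sum_add_distrib]⟩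

end TensorProduct

universe u

namespace LinearMap

variable {R : Type u} [CommRing R] {P Q : Type*} [AddCommGroup P] [Module R P]
  [AddCommGroup Q] [Module R Q]

def ReflectsLinearSystems (f : P →ₗ[R] Q) : Prop :=
  ∀ {m n : ℕ} (a : Fin m → Fin n → R) (p : Fin m → P) (q : Fin n → Q),
    (∀ i, f (p i) = ∑ j, a i j • q j) → ∃ p' : Fin n → P, ∀ i, p i = ∑ j, a i j • p' j

theorem reflectsLinearSystems_of_lTensor_injective (f : P →ₗ[R] Q)
    (hf : ∀ (N : Type u) [AddCommGroup N] [Module R N], Injective (f.lTensor N)) :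
    f.ReflectsLinearSystems := by
  intro m n a p q h
  let U : Submodule R (Fin m → R) := span R (Set.range fun j i => a i j)
  let e : Fin m → (Fin m → R) ⧸ U := fun i => U.mkQ (Pi.single i 1)
  have sum_smul_e (v : Fin m → R) : ∑ i, v i • e i = U.mkQ v := by
    simp only [e, ← map_smul, ← map_sum]
    congr 1
    ext j
    simp [Finset.sum_apply, Pi.single_apply]
  have he : span R (Set.range e) = ⊤ := by
    refine eq_top_iff.mpr fun x _ => ?_
    obtain ⟨v, rfl⟩ := U.mkQ_surjective x
    rw [← sum_smul_e]
    exact sum_mem fun i _ => smul_mem _ _ (subset_span ⟨i, rfl⟩)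
  have hcol (j : Fin n) : ∑ i, a i j • e i = 0 := by
    rw [sum_smul_e, mkQ_apply, Quotient.mk_eq_zero]
    exact subset_span ⟨j, rfl⟩
  have hzero : ∑ i, e i ⊗ₜ[R] p i = 0 := hf _ <| by
    simpa only [map_sum, lTensor_tmul, map_zero] using
      sum_tmul_eq_zero_of_vanishesTrivially R (.of_fintype a q h hcol)
  obtain ⟨k, b, y, hpy, hbe⟩ := vanishesTrivially_of_sum_tmul_eq_zero R he hzero
  have hb (l : Fin k) : (fun i => b i l) ∈ U := by
    rw [← Quotient.mk_eq_zero, ← mkQ_apply, ← sum_smul_e]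
    exact hbe l
  choose c hc using fun l => (mem_span_range_iff_exists_fun R).mp (hb l)
  refine ⟨fun j => ∑ l, c l j • y l, fun i => ?_⟩
  have hbi (l : Fin k) : b i l = ∑ j, c l j * a i j := by
    simpa using (congr_fun (hc l) i).symm
  simp_rw [hpy i, hbi, Finset.sum_smul, Finset.smul_sum, smul_smul, mul_comm (a i _)]
  exact Finset.sum_comm

theorem ReflectsLinearSystems.piMap {ι : Type*} {P Q : ι → Type*} [∀ c, AddCommGroup (P c)]
    [∀ c, Module R (P c)] [∀ c, AddCommGroup (Q c)] [∀ c, Module R (Q c)]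
    {f : ∀ c, P c →ₗ[R] Q c} (hf : ∀ c, (f c).ReflectsLinearSystems) :
    (LinearMap.piMap f).ReflectsLinearSystems := by
  intro m n a p q h
  choose p' hp' using fun c => hf c a (fun i => p i c) (fun j => q j c)
    fun i => by simpa using congr_fun (h i) c
  exact ⟨fun j c => p' c j, fun i => funext fun c => by simpa using hp' c i⟩

variable {f : P →ₗ[R] Q}

theorem ReflectsLinearSystems.lTensor_injective_of_finite (hf : f.ReflectsLinearSystems)
    (M : Type*) [AddCommGroup M] [Module R M] [Module.Finite R M] :
    Injective (f.lTensor M) := by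
  obtain ⟨k, m, hm⟩ := Module.Finite.exists_fin (R := R) (M := M)
  refine (injective_iff_map_eq_zero _).mpr fun x hx => ?_
  obtain ⟨p, rfl⟩ := exists_sum_tmul_eq_of_span_eq_top hm x
  simp only [map_sum, lTensor_tmul] at hx
  obtain ⟨l, a, y, hfp, ham⟩ := vanishesTrivially_of_sum_tmul_eq_zero R hm hx
  obtain ⟨p', hp'⟩ := hf a p y hfp
  exact sum_tmul_eq_zero_of_vanishesTrivially R ⟨l, a, p', hp', ham⟩

theorem lTensor_rTensor_comm {M₀ M : Type*} [AddCommGroup M₀] [Module R M₀] [AddCommGroup M]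
    [Module R M] (g : M₀ →ₗ[R] M) (t : M₀ ⊗[R] P) :
    f.lTensor M (g.rTensor P t) = g.rTensor Q (f.lTensor M₀ t) := by
  rw [← comp_apply, lTensor_comp_rTensor, ← rTensor_comp_lTensor, comp_apply]

theorem ReflectsLinearSystems.lTensor_injective (hf : f.ReflectsLinearSystems)
    (M : Type*) [AddCommGroup M] [Module R M] : Injective (f.lTensor M) := by
  refine (injective_iff_map_eq_zero _).mpr fun x hx => ?_
  obtain ⟨M₀, hM₀, t, rfl⟩ := TensorProduct.exists_of_fg x
  rw [lTensor_rTensor_comm] at hx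
  obtain ⟨M₁, hle, hM₁, h⟩ := TensorProduct.eq_zero_of_fg_of_subtype_eq_zero hM₀ hx
  have : Module.Finite R M₁ := Module.Finite.iff_fg.mpr hM₁
  have ht : (inclusion hle).rTensor P t = 0 :=
    hf.lTensor_injective_of_finite M₁ (by rw [lTensor_rTensor_comm, h, map_zero])
  rw [← subtype_comp_inclusion _ _ hle, rTensor_comp, comp_apply, ht, map_zero]

end LinearMap

theorem tensorPiMap_lTensor_piMap {R M : Type*} [CommRing R] [AddCommGroup M] [Module R M]
    {ι : Type*} {P Q : ι → Type*} [∀ i, AddCommGroup (P i)] [∀ i, Module R (P i)]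
    [∀ i, AddCommGroup (Q i)] [∀ i, Module R (Q i)] (f : ∀ i, P i →ₗ[R] Q i)
    (x : M ⊗[R] ∀ i, P i) :
    tensorPiMap R M Q ((piMap f).lTensor M x) =
      fun i => (f i).lTensor M (tensorPiMap R M P x i) := by
  ext i
  change (proj i).lTensor M ((piMap f).lTensor M x) = (f i).lTensor M ((proj i).lTensor M x)
  rw [← LinearMap.comp_apply, ← lTensor_comp, ← LinearMap.comp_apply, ← lTensor_comp]
  rfl

theorem s_mittagLeffler_pure_submodules {R : Type} [CommRing R] (S : Submonoid R)
    {M : Type} [AddCommGroup M] [Module R M] (Q : ModuleCat R → Prop)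
    (hM : IsSMittagLeffler R S M Q) :
    IsSMittagLeffler R S M (IsPureSubmoduleOf Q) := by
  intro ι N hN x hx
  choose Q₀ hQ₀ f _ hf using hN
  have hpure : (piMap f).ReflectsLinearSystems :=
    ReflectsLinearSystems.piMap fun i =>
      reflectsLinearSystems_of_lTensor_injective (f i) fun N _ _ => hf i (.of R N)
  have hker : (piMap f).lTensor M x ∈ ker (tensorPiMap R M fun i => (Q₀ i : Type)) := by
    rw [mem_ker, tensorPiMap_lTensor_piMap, mem_ker.mp hx]
    exact funext fun i => map_zero _
  obtain ⟨s, hs, hsx⟩ := hM ι Q₀ hQ₀ _ hker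
  exact ⟨s, hs, hpure.lTensor_injective M (by rw [map_smul, hsx, map_zero])⟩
end

section
/- If M is S-Mittag-Leffler with respect to a class Q of R-modules, then M is S-Mittag-Leffler with respect to the class of all direct limits (filtered colimits) of directed systems of modules from Q. -/
/-- Auxiliary: `P` is the direct limit of the directed system `(G, f)`. -/
def IsDirectLimitOfSystem (R : Type) [CommRing R] (ι : Type) [Preorder ι] [DecidableEq ι]
    (G : ι → ModuleCat R) (f : ∀ i j, i ≤ j → (G i : Type) →ₗ[R] (G j : Type))
    (P : ModuleCat R) : Prop :=
  IsDirected ι (· ≤ ·) ∧ DirectedSystem (fun i => (G i : Type)) (fun i j h => f i j h) ∧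
    Nonempty ((Module.DirectLimit (fun i => (G i : Type)) f) ≃ₗ[R] (P : Type))

/-- `P` is (isomorphic to) a direct limit of a directed system of modules from `Q`. -/
def IsDirectLimitOf {R : Type} [CommRing R] (Q : ModuleCat R → Prop)
    (P : ModuleCat R) : Prop :=
  ∃ (ι : Type) (instP : Preorder ι) (instD : DecidableEq ι) (G : ι → ModuleCat R)
    (f : ∀ i j, i ≤ j → (G i : Type) →ₗ[R] (G j : Type)),
    (∀ i, Q (G i)) ∧ @IsDirectLimitOfSystem R _ ι instP instD G f P

open TensorProduct

namespace Module.DirectLimit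

variable {R : Type*} [CommSemiring R] {κ : Type*} [Preorder κ] [DecidableEq κ]
  [IsDirectedOrder κ] [Nonempty κ] {G : κ → Type*} [∀ j, AddCommMonoid (G j)]
  [∀ j, Module R (G j)] {f : ∀ i j, i ≤ j → G i →ₗ[R] G j} {α : Type*}

theorem exists_of_finite [Finite α] (a : α → DirectLimit G f) :
    ∃ (j : κ) (g : α → G j), ∀ p, of R κ G f j (g p) = a p := by
  choose idx x hx using fun p => exists_of (a p)
  obtain ⟨j, hj⟩ := Finite.exists_le idx
  exact ⟨j, fun p => f _ j (hj p) (x p), fun p => by rw [of_f, hx]⟩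

theorem exists_of_sum_tmul_eq_zero [DirectedSystem G (f · · ·)] {M : Type*} [AddCommMonoid M]
    [Module R M] [Fintype α] (m : α → M) (a : α → DirectLimit G f)
    (h : ∑ p, m p ⊗ₜ[R] a p = 0) :
    ∃ (j : κ) (g : α → G j), (∀ p, of R κ G f j (g p) = a p) ∧ ∑ p, m p ⊗ₜ[R] g p = 0 := by
  obtain ⟨j, g, hg⟩ := exists_of_finite a
  have hzero : of R κ _ (fun i j h => (f i j h).lTensor M) j (∑ p, m p ⊗ₜ[R] g p) = 0 := by
    simp_rw [← hg] at h
    simpa using congrArg (directLimitRight f M) h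
  obtain ⟨k, hjk, hk⟩ := of.zero_exact hzero
  refine ⟨k, fun p => f j k hjk (g p), fun p => by rw [of_f, hg], ?_⟩
  simpa using hk

end Module.DirectLimit

@[simp]
theorem tensorPiMap_tmul (R : Type*) [CommRing R] {M : Type*} [AddCommGroup M] [Module R M]
    {ι : Type*} (N : ι → Type*) [∀ i, AddCommGroup (N i)] [∀ i, Module R (N i)]
    (m : M) (n : ∀ i, N i) : tensorPiMap R M N (m ⊗ₜ n) = fun i => m ⊗ₜ n i :=
  rfl

theorem IsDirectLimitOf.subsingleton_or_exists_lift {R : Type} [CommRing R]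
    {Q : ModuleCat R → Prop} {P : ModuleCat R} (hP : IsDirectLimitOf Q P)
    {M : Type*} [AddCommMonoid M] [Module R M] {α : Type*} [Fintype α] (m : α → M) (n : α → P)
    (h : ∑ p, m p ⊗ₜ[R] n p = 0) :
    Subsingleton P ∨ ∃ (P' : ModuleCat R) (φ : P' →ₗ[R] P) (g : α → P'),
      Q P' ∧ (∀ p, φ (g p) = n p) ∧ ∑ p, m p ⊗ₜ[R] g p = 0 := by
  obtain ⟨κ, _, _, G, f, hQ, _, _, ⟨e⟩⟩ := hP
  cases isEmpty_or_nonempty κ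
  · exact Or.inl e.symm.toEquiv.subsingleton
  · have h' : ∑ p, m p ⊗ₜ[R] e.symm (n p) = 0 := by
      simpa using congrArg (LinearMap.lTensor M e.symm.toLinearMap) h
    obtain ⟨j, g, hg, hsum⟩ := Module.DirectLimit.exists_of_sum_tmul_eq_zero m _ h'
    exact Or.inr ⟨G j, e.toLinearMap ∘ₗ Module.DirectLimit.of R κ _ f j, g, hQ j,
      fun p => by simp [hg], hsum⟩

theorem IsSMittagLeffler.of_subsingleton_or_exists_lift {R : Type} [CommRing R]
    {S : Submonoid R} {M : Type} [AddCommGroup M] [Module R M] {Q Q' : ModuleCat R → Prop}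
    (hM : IsSMittagLeffler R S M Q)
    (hQ' : ∀ P, Q' P → ∀ {α : Type} [Fintype α] (m : α → M) (n : α → P),
      ∑ p, m p ⊗ₜ[R] n p = 0 → Subsingleton P ∨ ∃ (P' : ModuleCat R) (φ : P' →ₗ[R] P)
        (g : α → P'), Q P' ∧ (∀ p, φ (g p) = n p) ∧ ∑ p, m p ⊗ₜ[R] g p = 0) :
    IsSMittagLeffler R S M Q' := by
  classical
  intro ι N hN x hx
  obtain ⟨t, rfl⟩ := TensorProduct.exists_finset x
  rw [← Finset.sum_coe_sort] at hx ⊢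
  have hcomp (i : ι) : ∑ p : t, p.1.1 ⊗ₜ[R] p.1.2 i = 0 := by
    simpa using congrFun (LinearMap.mem_ker.mp hx) i
  -- Only nontrivial factors are guaranteed a lift (a direct limit over an empty index set is
  -- trivial); the trivial ones are dropped from the product.
  choose P' φ g hQ hφg hg using fun i : {i // ¬Subsingleton (N i)} =>
    (hQ' _ (hN i) _ _ (hcomp i)).resolve_left i.2
  let y := ∑ p : t, p.1.1 ⊗ₜ[R] fun i => g i p
  obtain ⟨s, hs, hsy⟩ := hM _ P' hQ y (by ext i; simpa [y] using hg i)
  let ψ : (∀ i, P' i) →ₗ[R] ∀ i, N i := LinearMap.pi fun i =>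
    if h : Subsingleton (N i) then 0
    else φ ⟨i, h⟩ ∘ₗ LinearMap.proj (φ := fun i => P' i) ⟨i, h⟩
  have hψy : ψ.lTensor M y = ∑ p : t, p.1.1 ⊗ₜ[R] p.1.2 := by
    simp only [y, map_sum, LinearMap.lTensor_tmul]
    refine Finset.sum_congr rfl fun p _ => congrArg _ (funext fun i => ?_)
    by_cases h : Subsingleton (N i)
    · exact Subsingleton.elim _ _
    · simp [ψ, h, hφg]
  exact ⟨s, hs, by rw [← hψy, ← map_smul, hsy, map_zero]⟩

theorem s_mittagLeffler_direct_limits {R : Type} [CommRing R] (S : Submonoid R)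
    {M : Type} [AddCommGroup M] [Module R M] (Q : ModuleCat R → Prop)
    (hM : IsSMittagLeffler R S M Q) :
    IsSMittagLeffler R S M (IsDirectLimitOf Q) :=
  hM.of_subsingleton_or_exists_lift fun _ hP _ _ => hP.subsingleton_or_exists_lift
end

section
/- Let M be an R-module such that the canonical map φ : M ⊗_R R^M → M^M (indexed by the underlying set of M, with all factors equal to R resp. M) is an S-epimorphism. Then M is S-finite. -/
/-- The canonical map `M ⊗[R] R^M → M^M` sending `m ⊗ (rᵢ)ᵢ` to `(rᵢ • m)ᵢ`. -/
noncomputable def canonicalMapRM (R : Type*) [CommRing R] (M : Type*) [AddCommGroup M]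
    [Module R M] : (TensorProduct R M (M → R)) →ₗ[R] (M → M) :=
  LinearMap.pi fun i =>
    (TensorProduct.rid R M).toLinearMap.comp (LinearMap.lTensor M (LinearMap.proj i))

theorem s_epi_canonical_implies_s_finite {R : Type*} [CommRing R] (S : Submonoid R)
    {M : Type*} [AddCommGroup M] [Module R M]
    (h : ∀ y : M → M, ∃ s ∈ S, s • y ∈ LinearMap.range (canonicalMapRM R M)) :
    IsSFinite R S M := by
  classical
  obtain ⟨s, hs, t, ht⟩ := h id
  obtain ⟨T, rfl⟩ := TensorProduct.exists_finset t
  refine ⟨Submodule.span R (T.image Prod.fst : Set M), ⟨T.image Prod.fst, rfl⟩, s, hs, fun m => ?_⟩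
  have := congrFun ht m
  simp only [Pi.smul_apply, id] at this
  rw [← this]
  simp only [map_sum, canonicalMapRM, LinearMap.pi_apply, LinearMap.comp_apply,
    LinearMap.lTensor_tmul, LinearEquiv.coe_coe, TensorProduct.rid_tmul, Finset.sum_apply]
  refine Submodule.sum_mem _ fun p hp => Submodule.smul_mem _ _ (Submodule.subset_span ?_)
  exact Finset.mem_coe.2 (Finset.mem_image_of_mem Prod.fst hp)
end

section
/- The following are equivalent for a commutative ring R and multiplicatively closed subset S: (1) R is S-coherent (every finitely generated ideal is S-finitely presented); (2) every direct product of flat R-modules is S-flat; (3) every direct product of copies of R (i.e., R^I for any index set I) is S-flat. -/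
/-!
For a finite free module `F`, the canonical map `F ⊗ ∏ Nᵢ → ∏ (F ⊗ Nᵢ)` is bijective; this is
what lets a uniform `s ∈ S` pass through an arbitrary product.

Coherent ⇒ products of flat modules are `S`-flat: present a finitely generated ideal as
`f : Rⁿ ↠ I` with kernel `K` and `s • K ⊆ C(Rᵐ)` for some `C : Rᵐ → K`. An element of
`I ⊗ ∏ Nᵢ` killed in `R ⊗ ∏ Nᵢ` lifts to `y ∈ Rⁿ ⊗ ∏ Nᵢ`. Flatness of `Nᵢ` puts every component
of `y` in the image of `K ⊗ Nᵢ`, so every component of `s • y` lies in the image of `Rᵐ ⊗ Nᵢ`;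
by the bijection these assemble into one preimage of `s • y` in `Rᵐ ⊗ ∏ Nᵢ`, which dies in
`I ⊗ ∏ Nᵢ` because `f ∘ C = 0`.

`S`-flat powers ⇒ coherent: take the power `R^K` indexed by the kernel itself and the
tautological element `y ∈ Rⁿ ⊗ R^K` whose `κ`-th component is `κ ⊗ 1`. If `s` kills its image
in `I ⊗ R^K`, then `s • y` comes from a finite sum of tensors in `K ⊗ R^K`, and reading off
the `κ`-th components shows that `s • κ` lies in the span of their first factors.
-/

open TensorProduct LinearMap

namespace TensorProduct

noncomputable def piScalarLeft (R M κ : Type*) [CommSemiring R] [AddCommMonoid M] [Module R M]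
    [Fintype κ] [DecidableEq κ] : (κ → R) ⊗[R] M ≃ₗ[R] (κ → M) :=
  (TensorProduct.comm R _ M).trans (piScalarRight R R M κ)

@[simp]
theorem piScalarLeft_tmul {R M κ : Type*} [CommSemiring R] [AddCommMonoid M] [Module R M]
    [Fintype κ] [DecidableEq κ] (v : κ → R) (m : M) :
    piScalarLeft R M κ (v ⊗ₜ m) = fun k ↦ v k • m := by
  simp [piScalarLeft]

section Pi

variable {R : Type*} [CommSemiring R] {F G : Type*} [AddCommMonoid F] [Module R F]
  [AddCommMonoid G] [Module R G] {ι : Type*} {N : ι → Type*} [∀ i, AddCommMonoid (N i)]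
  [∀ i, Module R (N i)]

theorem piRightHom_rTensor (g : F →ₗ[R] G) (y : F ⊗[R] ∀ i, N i) (i : ι) :
    piRightHom R R G N (g.rTensor _ y) i = g.rTensor (N i) (piRightHom R R F N y i) := by
  induction y using TensorProduct.induction_on with
  | zero => simp
  | tmul x f => rfl
  | add y y' hy hy' => simp only [map_add, Pi.add_apply, hy, hy']

theorem piScalarLeft_piRightHom {κ : Type*} [Fintype κ] [DecidableEq κ]
    (y : (κ → R) ⊗[R] ∀ i, N i) (i : ι) (k : κ) :
    piScalarLeft R (N i) κ (piRightHom R R (κ → R) N y i) k = piScalarLeft R _ κ y k i := by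
  induction y using TensorProduct.induction_on with
  | zero => simp
  | tmul x f => simp
  | add y y' hy hy' => simp only [map_add, Pi.add_apply, hy, hy']

theorem bijective_piRightHom_pi {κ : Type*} [Finite κ] :
    Function.Bijective (piRightHom R R (κ → R) N) := by
  classical
  have := Fintype.ofFinite κ
  constructor
  · intro y y' h
    apply (piScalarLeft R _ κ).injective
    funext k i
    rw [← piScalarLeft_piRightHom, ← piScalarLeft_piRightHom, h]
  · intro g
    refine ⟨(piScalarLeft R _ κ).symm fun k i ↦ piScalarLeft R (N i) κ (g i) k,
      funext fun i ↦ (piScalarLeft R (N i) κ).injective (funext fun k ↦ ?_)⟩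
    rw [piScalarLeft_piRightHom, LinearEquiv.apply_symm_apply]

theorem bijective_piRightHom_of_free [Module.Free R F] [Module.Finite R F] :
    Function.Bijective (piRightHom R R F N) := by
  let e := (Module.Free.chooseBasis R F).equivFun
  have h : ⇑(piRightHom R R F N) = Pi.map (fun i ↦ e.symm.rTensor (N i)) ∘
      piRightHom R R _ N ∘ e.rTensor _ := by
    funext y i
    change _ = e.symm.toLinearMap.rTensor _ (piRightHom R R _ N (e.toLinearMap.rTensor _ y) i)
    rw [piRightHom_rTensor, ← LinearMap.rTensor_comp_apply, LinearEquiv.symm_comp,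
      LinearMap.rTensor_id, LinearMap.id_apply]
  rw [h]
  exact (Function.Bijective.piMap fun i ↦ (e.symm.rTensor _).bijective).comp
    (bijective_piRightHom_pi.comp (e.rTensor _).bijective)

theorem exists_fg_forall_piRightHom_eq_tmul_one (w : F ⊗[R] (ι → R)) :
    ∃ F₀ : Submodule R F, F₀.FG ∧ ∀ i, ∃ x ∈ F₀, piRightHom R R F (fun _ ↦ R) w i = x ⊗ₜ 1 := by
  induction w using TensorProduct.induction_on with
  | zero => exact ⟨⊥, Submodule.fg_bot, fun i ↦ ⟨0, zero_mem _, by simp⟩⟩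
  | tmul x g =>
    refine ⟨R ∙ x, Submodule.fg_span_singleton x, fun i ↦ ⟨g i • x,
      Submodule.smul_mem _ _ (Submodule.mem_span_singleton_self x), ?_⟩⟩
    rw [piRightHom_tmul, smul_tmul, smul_eq_mul, mul_one]
  | add w w' hw hw' =>
    obtain ⟨F₀, hF₀, h⟩ := hw
    obtain ⟨F₀', hF₀', h'⟩ := hw'
    refine ⟨F₀ ⊔ F₀', hF₀.sup hF₀', fun i ↦ ?_⟩
    obtain ⟨x, hx, hxi⟩ := h i
    obtain ⟨x', hx', hxi'⟩ := h' i
    exact ⟨x + x', Submodule.add_mem_sup hx hx', by rw [map_add, Pi.add_apply, hxi, hxi', add_tmul]⟩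

end Pi

end TensorProduct

section Exact

variable {R : Type*} [CommRing R] {M F G H : Type*} [AddCommGroup M] [Module R M]
  [AddCommGroup F] [Module R F] [AddCommGroup G] [Module R G] [AddCommGroup H] [Module R H]

theorem Module.Flat.mem_range_rTensor_ker_subtype [Module.Flat R M] {f : F →ₗ[R] G}
    (hf : Function.Surjective f) {j : G →ₗ[R] H} (hj : Function.Injective j)
    {y : F ⊗[R] M} (hy : (j ∘ₗ f).rTensor M y = 0) : y ∈ range ((ker f).subtype.rTensor M) := by
  rw [rTensor_comp_apply, ← map_zero (j.rTensor M)] at hy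
  exact (_root_.rTensor_exact M (exact_subtype_ker_map f) hf _).mp
    (Module.Flat.rTensor_preserves_injective_linearMap j hj hy)

theorem smul_mem_range_rTensor {K : Submodule R F} {C : G →ₗ[R] F} {s : R}
    (hs : ∀ k ∈ K, s • k ∈ range C) {y : F ⊗[R] M} (hy : y ∈ range (K.subtype.rTensor M)) :
    s • y ∈ range (C.rTensor M) := by
  obtain ⟨w, rfl⟩ := hy
  let μ : K →ₗ[R] range C := (s • K.subtype).codRestrict _ fun k ↦ hs k k.2
  obtain ⟨u, hu⟩ := rTensor_surjective M C.surjective_rangeRestrict (μ.rTensor M w)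
  refine ⟨u, ?_⟩
  calc C.rTensor M u = (range C).subtype.rTensor M (C.rangeRestrict.rTensor M u) := by
        rw [← rTensor_comp_apply, subtype_comp_codRestrict]
    _ = (s • K.subtype).rTensor M w := by
        rw [hu, ← rTensor_comp_apply]
        rfl
    _ = s • K.subtype.rTensor M w := by rw [rTensor_smul, LinearMap.smul_apply]

end Exact

theorem IsSFinite.exists_fin_linearMap {R : Type*} [CommRing R] {S : Submonoid R} {F : Type*}
    [AddCommGroup F] [Module R F] {K : Submodule R F} (hK : IsSFinite R S K) :
    ∃ (m : ℕ) (C : (Fin m → R) →ₗ[R] F), range C ≤ K ∧ ∃ s ∈ S, ∀ k ∈ K, s • k ∈ range C := by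
  obtain ⟨K₀, hK₀, s, hs, hsK⟩ := hK
  obtain ⟨m, c, rfl⟩ := Submodule.fg_iff_exists_fin_generating_family.mp hK₀
  refine ⟨m, Fintype.linearCombination R (K.subtype ∘ c), ?_, s, hs, fun k hk ↦ ?_⟩
  · rw [Fintype.range_linearCombination, Submodule.span_le]
    rintro _ ⟨u, rfl⟩
    exact (c u).2
  · have := Submodule.mem_map_of_mem (f := K.subtype) (hsK ⟨k, hk⟩)
    rwa [Submodule.map_span, ← Set.range_comp, ← Fintype.range_linearCombination] at this

theorem IsSCoherent.isSFlat_pi {R : Type*} [CommRing R] {S : Submonoid R}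
    (hR : IsSCoherent R S) {ι : Type*} (N : ι → Type*) [∀ i, AddCommGroup (N i)]
    [∀ i, Module R (N i)] [∀ i, Module.Flat R (N i)] : IsSFlat R S (∀ i, N i) := by
  intro I hI x hx
  obtain ⟨n, f, hf, hK⟩ := hR I hI
  obtain ⟨m, C, hCK, s, hs, hsC⟩ := hK.exists_fin_linearMap
  obtain ⟨y, rfl⟩ := rTensor_surjective _ hf x
  have hlift : ∀ i, ∃ t, C.rTensor (N i) t = piRightHom R R _ N (s • y) i := by
    intro i
    have hyi : (I.subtype ∘ₗ f).rTensor (N i) (piRightHom R R _ N y i) = 0 := by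
      rw [← piRightHom_rTensor, rTensor_comp_apply, mem_ker.mp hx, map_zero, Pi.zero_apply]
    rw [map_smul, Pi.smul_apply]
    exact smul_mem_range_rTensor hsC
      (Module.Flat.mem_range_rTensor_ker_subtype hf I.injective_subtype hyi)
  choose t ht using hlift
  obtain ⟨t', rfl⟩ := bijective_piRightHom_of_free.2 t
  have hsy : C.rTensor _ t' = s • y := bijective_piRightHom_of_free.1 <| funext fun i ↦ by
    rw [piRightHom_rTensor, ht]
  refine ⟨s, hs, ?_⟩
  rw [← map_smul, ← hsy, ← rTensor_comp_apply, range_le_ker_iff.mp hCK, rTensor_zero,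
    LinearMap.zero_apply]

universe u

theorem isSCoherent_of_forall_isSFlat_pi {R : Type u} [CommRing R] {S : Submonoid R}
    (h : ∀ ι : Type u, IsSFlat R S (ι → R)) : IsSCoherent R S := by
  intro I hI
  have := Module.Finite.iff_fg.mpr hI
  obtain ⟨n, f, hf⟩ := Module.Finite.exists_fin' R I
  refine ⟨n, f, hf, ?_⟩
  obtain ⟨y, hy⟩ := bijective_piRightHom_of_free (R := R) (F := Fin n → R)
    (N := fun _ : ker f ↦ R) |>.2 fun κ ↦ (κ : Fin n → R) ⊗ₜ 1
  have hx : f.rTensor _ y ∈ ker (I.subtype.rTensor (ker f → R)) := by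
    rw [mem_ker, ← rTensor_comp_apply]
    refine bijective_piRightHom_of_free (R := R) (F := R) (N := fun _ : ker f ↦ R)
      |>.1 (funext fun κ ↦ ?_)
    rw [piRightHom_rTensor, hy, rTensor_tmul, comp_apply, mem_ker.mp κ.2, map_zero, zero_tmul,
      map_zero, Pi.zero_apply]
  obtain ⟨s, hs, hsx⟩ := h (ker f) I hI _ hx
  obtain ⟨w, hw⟩ := (rTensor_exact _ (exact_subtype_ker_map f) hf (s • y)).mp
    (by rw [map_smul, hsx])
  obtain ⟨K₀, hK₀, hwK₀⟩ := exists_fg_forall_piRightHom_eq_tmul_one w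
  refine ⟨K₀, hK₀, s, hs, fun κ ↦ ?_⟩
  obtain ⟨k, hk, hwk⟩ := hwK₀ κ
  have hsκ : s • (κ : Fin n → R) = k := by
    have := congrArg (fun z ↦ TensorProduct.rid R _ (piRightHom R R _ _ z κ)) hw
    simpa [piRightHom_rTensor, hwk, hy] using this.symm
  rwa [show s • κ = k from Subtype.ext hsκ]

theorem s_version_of_chase_theorem {R : Type} [CommRing R] (S : Submonoid R) :
    (IsSCoherent R S ↔
      ∀ (ι : Type) (N : ι → ModuleCat R), (∀ i, Module.Flat R (N i : Type)) →
        IsSFlat R S (∀ i, (N i : Type))) ∧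
    ((∀ (ι : Type) (N : ι → ModuleCat R), (∀ i, Module.Flat R (N i : Type)) →
        IsSFlat R S (∀ i, (N i : Type))) ↔
      ∀ ι : Type, IsSFlat R S (ι → R)) := by
  have coherent_to_products : IsSCoherent R S → ∀ (ι : Type) (N : ι → ModuleCat R),
      (∀ i, Module.Flat R (N i : Type)) → IsSFlat R S (∀ i, (N i : Type)) :=
    fun hR _ N hN ↦ hR.isSFlat_pi (fun i ↦ N i)
  have products_to_powers : (∀ (ι : Type) (N : ι → ModuleCat R),
      (∀ i, Module.Flat R (N i : Type)) → IsSFlat R S (∀ i, (N i : Type))) →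
      ∀ ι : Type, IsSFlat R S (ι → R) :=
    fun h ι ↦ h ι (fun _ ↦ ModuleCat.of R R) fun _ ↦ Module.Flat.self
  exact ⟨⟨coherent_to_products, isSCoherent_of_forall_isSFlat_pi ∘ products_to_powers⟩,
    ⟨products_to_powers, coherent_to_products ∘ isSCoherent_of_forall_isSFlat_pi⟩⟩
end
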